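/- Under the degree-elevation relation f_i = \alpha_i \hat{f}_i + (1-\alpha_i)\hat{f}_{i+1} for i = 1,...,K with \alpha_1 = 1, \alpha_{K+1} = 0 (and f_{K+1} = \hat{f}_{K+2} = 0), a spline \sum_{i=1}^K c_i (f_i - f_{i+1}) equals \sum_{i=1}^{K+1} \hat{c}_i(\hat{f}_i - \hat{f}_{i+1}) with \hat{c}_1 = c_1, \hat{c}_i = \alpha_i c_i + (1-\alpha_i)c_{i-1} for 2 \le i \le K, \hat{c}_{K+1} = c_K. -/

import Mathlib

/-!
Substituting `f_i = α_i f̂_i + (1 - α_i) f̂_{i+1}` turns each term `c_i (f_i - f_{i+1})` into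
`α_i c_i (f̂_i - f̂_{i+1}) + (1 - α_{i+1}) c_i (f̂_{i+1} - f̂_{i+2})`. Summing over `i` and collecting
the coefficient of `f̂_i - f̂_{i+1}` gives `α_i c_i + (1 - α_i) c_{i-1}`; the boundary terms vanish
because `α_1 = 1` and `α_{K+1} = 0`.
-/

open Finset

namespace DegreeElevation

variable {R : Type*} [CommRing R]

def blend (α h : ℕ → R) (i : ℕ) : R := α i * h i + (1 - α i) * h (i + 1)

def blendBack (α c : ℕ → R) (i : ℕ) : R := α i * c i + (1 - α i) * c (i - 1)

theorem mul_sub_blend (α c h : ℕ → R) (i : ℕ) :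
    c i * (blend α h i - blend α h (i + 1)) =
      α i * c i * (h i - h (i + 1)) + (1 - α (i + 1)) * c i * (h (i + 1) - h (i + 2)) := by
  simp only [blend]
  ring

theorem sum_mul_sub_blend (α c h : ℕ → R) (hα : α 1 = 1) (n : ℕ) :
    ∑ i ∈ Icc 1 n, c i * (blend α h i - blend α h (i + 1)) =
      ∑ i ∈ Icc 1 n, blendBack α c i * (h i - h (i + 1)) +
        (1 - α (n + 1)) * c n * (h (n + 1) - h (n + 2)) := by
  induction n with
  | zero => simp [hα]
  | succ n ih =>
    rw [sum_Icc_succ_top (by omega), sum_Icc_succ_top (by omega), ih, mul_sub_blend, blendBack,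
      Nat.add_sub_cancel]
    ring

end DegreeElevation

open DegreeElevation

theorem stmt19_general (K : ℕ) (f fh : ℕ → ℝ → ℝ) (α c ch : ℕ → ℝ)
    (hrel : ∀ i ∈ Finset.Icc 1 K, ∀ x, f i x = α i * fh i x + (1 - α i) * fh (i + 1) x)
    (hfK : ∀ x, f (K + 1) x = 0)
    (hfhK : ∀ x, fh (K + 2) x = 0)
    (hα1 : α 1 = 1) (hαK : α (K + 1) = 0)
    (hch1 : ch 1 = c 1)
    (hchmid : ∀ i ∈ Finset.Icc 2 K, ch i = α i * c i + (1 - α i) * c (i - 1))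
    (hchK : ch (K + 1) = c K) :
    ∀ x, ∑ i ∈ Finset.Icc 1 K, c i * (f i x - f (i + 1) x)
        = ∑ i ∈ Finset.Icc 1 (K + 1), ch i * (fh i x - fh (i + 1) x) := by
  intro x
  have hf : ∀ i ∈ Icc 1 (K + 1), f i x = blend α (fh · x) i := by
    intro i hi
    rcases (mem_Icc.mp hi).2.lt_or_eq with hlt | rfl
    · exact hrel i (mem_Icc.mpr ⟨(mem_Icc.mp hi).1, by omega⟩) x
    · simp [blend, hfK, hfhK, hαK]
  have hch : ∀ i ∈ Icc 1 K, ch i = blendBack α c i := by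
    intro i hi
    rcases (mem_Icc.mp hi).1.eq_or_lt with rfl | hlt
    · simp [blendBack, hch1, hα1]
    · exact hchmid i (mem_Icc.mpr ⟨hlt, (mem_Icc.mp hi).2⟩)
  calc ∑ i ∈ Icc 1 K, c i * (f i x - f (i + 1) x)
      = ∑ i ∈ Icc 1 K, c i * (blend α (fh · x) i - blend α (fh · x) (i + 1)) :=
        sum_congr rfl fun i hi => by
          obtain ⟨hi1, hiK⟩ := mem_Icc.mp hi
          rw [hf i (mem_Icc.mpr ⟨hi1, by omega⟩), hf (i + 1) (mem_Icc.mpr ⟨by omega, by omega⟩)]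
    _ = ∑ i ∈ Icc 1 K, blendBack α c i * (fh i x - fh (i + 1) x)
          + (1 - α (K + 1)) * c K * (fh (K + 1) x - fh (K + 2) x) :=
        sum_mul_sub_blend α c (fh · x) hα1 K
    _ = ∑ i ∈ Icc 1 (K + 1), ch i * (fh i x - fh (i + 1) x) := by
        have hsum : ∑ i ∈ Icc 1 K, ch i * (fh i x - fh (i + 1) x) =
            ∑ i ∈ Icc 1 K, blendBack α c i * (fh i x - fh (i + 1) x) :=
          sum_congr rfl fun i hi => by rw [hch i hi]
        rw [sum_Icc_succ_top (by omega), hsum, hαK, hchK]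
        ring

/-- Control point formula for local degree elevation of MD-splines. -/
theorem stmt19 (K : ℕ) (hK : 1 ≤ K) (f fh : ℕ → ℝ → ℝ) (α c ch : ℕ → ℝ)
    (hrel : ∀ i ∈ Finset.Icc 1 K, ∀ x, f i x = α i * fh i x + (1 - α i) * fh (i + 1) x)
    (hfK : ∀ x, f (K + 1) x = 0)
    (hfhK : ∀ x, fh (K + 2) x = 0)
    (hα1 : α 1 = 1) (hαK : α (K + 1) = 0)
    (hch1 : ch 1 = c 1)
    (hchmid : ∀ i ∈ Finset.Icc 2 K, ch i = α i * c i + (1 - α i) * c (i - 1))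
    (hchK : ch (K + 1) = c K) :
    ∀ x, ∑ i ∈ Finset.Icc 1 K, c i * (f i x - f (i + 1) x)
        = ∑ i ∈ Finset.Icc 1 (K + 1), ch i * (fh i x - fh (i + 1) x) :=
  stmt19_general K f fh α c ch hrel hfK hfhK hα1 hαK hch1 hchmid hchK
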